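/- arXiv:1102.1558 — 4 statements merged into one kernel-verified Lean document; each statement's English description precedes it below -/
import Mathlib

section
/- Let g be strictly concave on [0,∞) with g(0)=0 and g positive on (0,∞), and set d(x,y) = g(|x-y|). If x₁ < y₂ < y₁ < x₂ (configuration where the interval [y₂,x₂] strictly overlaps [x₁,y₁] with crossing), then d(x₁,y₁) + d(x₂,y₂) > d(x₁,y₂) + d(x₂,y₁). -/
/-!
With `a = y₂ - x₁`, `c = x₂ - y₁` and `b = y₁ - y₂`, the claim reads
`g a + g c < g (a + b) + g (b + c)`, so it suffices that `g` is strictly increasing on `[0, ∞)`.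
If a concave function drops between two points, every later secant slope stays below that negative
slope, so the function eventually goes below any bound; strict concavity turns a mere failure of
strict monotonicity into such a drop, and positivity of `g` rules it out.
-/

open Set

lemma ConcaveOn.not_bddBelow_of_lt {f : ℝ → ℝ} {a v w : ℝ} (hf : ConcaveOn ℝ (Ici a) f)
    (hv : a ≤ v) (hvw : v < w) (hlt : f w < f v) : ¬ BddBelow (f '' Ici a) := by
  rintro ⟨b, hb⟩
  set s := (f w - f v) / (w - v)
  have hs_neg : s < 0 := div_neg_of_neg_of_pos (by linarith) (by linarith)
  have hbw : b ≤ f w := hb ⟨w, by simp only [mem_Ici]; linarith, rfl⟩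
  -- the secant bound from `w` with slope `s` gives `f z ≤ b - 1`
  set z := w + (f w - b + 1) / -s
  have hwz : w < z := lt_add_of_pos_right w (div_pos (by linarith) (by linarith))
  have hbz : b ≤ f z := hb ⟨z, by simp only [mem_Ici]; linarith, rfl⟩
  have hslope : (f z - f w) / (z - w) ≤ s :=
    hf.slope_anti_adjacent (mem_Ici.2 hv) (mem_Ici.2 (by linarith)) hvw hwz
  have hzw : z - w = (f w - b + 1) / -s := by ring
  rw [div_le_iff₀ (by linarith), hzw, mul_div_assoc', div_neg, mul_div_cancel_left₀ _ hs_neg.ne]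
    at hslope
  linarith

lemma StrictConcaveOn.strictMonoOn_of_bddBelow {f : ℝ → ℝ} {a : ℝ}
    (hf : StrictConcaveOn ℝ (Ici a) f) (hb : BddBelow (f '' Ici a)) : StrictMonoOn f (Ici a) := by
  intro u hu v hv huv
  by_contra! hle
  have hdrop : f (v + 1) < f v := by
    have := hf.slope_anti_adjacent hu (mem_Ici.2 (by linarith [mem_Ici.1 hv])) huv
      (lt_add_one v)
    rw [add_sub_cancel_left, div_one] at this
    have : (f v - f u) / (v - u) ≤ 0 := div_nonpos_of_nonpos_of_nonneg (by linarith) (by linarith)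
    linarith
  exact hf.concaveOn.not_bddBelow_of_lt hv (lt_add_one v) hdrop hb

lemma strictConcaveOn_Ici_zero_of_forall {g : ℝ → ℝ}
    (hconc : ∀ x : ℝ, 0 ≤ x → ∀ y : ℝ, 0 ≤ y → x ≠ y → ∀ l : ℝ, 0 < l → l < 1 →
      l * g x + (1 - l) * g y < g (l * x + (1 - l) * y)) :
    StrictConcaveOn ℝ (Ici 0) g := by
  refine ⟨convex_Ici 0, fun x hx y hy hxy l m hl hm hlm => ?_⟩
  obtain rfl : m = 1 - l := by linarith
  exact hconc x hx y hy hxy l hl (by linarith)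

/-- For `d(x,y) = g |x - y|` with `g` strictly concave, `g 0 = 0`, `g > 0` on `(0,∞)`:
if `x₁ < y₂ < y₁ < x₂` then `d(x₁,y₁) + d(x₂,y₂) > d(x₁,y₂) + d(x₂,y₁)`. -/
theorem stmt_4 (g : ℝ → ℝ)
    (hconc : ∀ x : ℝ, 0 ≤ x → ∀ y : ℝ, 0 ≤ y → x ≠ y → ∀ l : ℝ, 0 < l → l < 1 →
      l * g x + (1 - l) * g y < g (l * x + (1 - l) * y))
    (h0 : g 0 = 0) (hpos : ∀ x : ℝ, 0 < x → 0 < g x)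
    (d : ℝ → ℝ → ℝ) (hd : ∀ x y : ℝ, d x y = g |x - y|)
    (x₁ y₂ y₁ x₂ : ℝ) (h1 : x₁ < y₂) (h2 : y₂ < y₁) (h3 : y₁ < x₂) :
    d x₁ y₂ + d x₂ y₁ < d x₁ y₁ + d x₂ y₂ := by
  have hbdd : BddBelow (g '' Ici 0) := by
    refine ⟨0, ?_⟩
    rintro _ ⟨x, hx, rfl⟩
    rcases (mem_Ici.1 hx).eq_or_lt with rfl | hx
    · exact h0.ge
    · exact (hpos x hx).le
  have hmono := (strictConcaveOn_Ici_zero_of_forall hconc).strictMonoOn_of_bddBelow hbdd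
  simp only [hd, abs_sub_comm x₁, abs_of_pos (sub_pos.2 h1), abs_of_pos (sub_pos.2 (h1.trans h2)),
    abs_of_pos (sub_pos.2 h3), abs_of_pos (sub_pos.2 (h2.trans h3))]
  have hleft : g (y₂ - x₁) < g (y₁ - x₁) :=
    hmono (mem_Ici.2 (by linarith)) (mem_Ici.2 (by linarith)) (by linarith)
  have hright : g (x₂ - y₁) < g (x₂ - y₂) :=
    hmono (mem_Ici.2 (by linarith)) (mem_Ici.2 (by linarith)) (by linarith)
  linarith
end

section
/- Let 2n points x₁ < ... < x_{2n} on ℝ be given, with weight d(xᵢ,xⱼ) = g(|xᵢ - xⱼ|) for g strictly concave on [0,∞) with g(0)=0 and g > 0 on (0,∞). Any minimum-weight perfect matching on these points is nested: for any two matched pairs, the corresponding closed intervals are either disjoint or one contains the other. -/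
/-!
If two matched pairs `{a, b}` and `{c, d}` crossed, `a < c < b < d`, rematching them as `{a, d}`
and `{b, c}` would keep the total length `(x b - x a) + (x d - x c) = (x d - x a) + (x b - x c)`
while spreading it out, so strict concavity makes the new matching strictly cheaper. Hence a
minimum-weight matching has no crossing pairs, and two matched intervals whose endpoints do not
interleave are disjoint or nested.
-/

open Finset Set Function Equiv

theorem StrictConcaveOn.add_lt_add_of_lt_of_lt {s : Set ℝ} {g : ℝ → ℝ}
    (hg : StrictConcaveOn ℝ s g) {p q P Q : ℝ} (hQ : Q ∈ s) (hP : P ∈ s) (hQp : Q < p)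
    (hpP : p < P) (hsum : p + q = P + Q) :
    g P + g Q < g p + g q := by
  have hPQ : 0 < P - Q := by linarith
  set l := (P - p) / (P - Q) with hl_def
  have hl : 0 < l := div_pos (by linarith) hPQ
  have hl' : l < 1 := (div_lt_one hPQ).2 (by linarith)
  have hp : l * Q + (1 - l) * P = p := by rw [hl_def]; field_simp; ring
  have hq : (1 - l) * Q + l * P = q := by linear_combination -hp - hsum
  have h₁ := hg.2 hQ hP (by linarith) hl (sub_pos.2 hl') (by ring)
  have h₂ := hg.2 hQ hP (by linarith) (sub_pos.2 hl') hl (by ring)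
  simp only [smul_eq_mul, hp, hq] at h₁ h₂
  linarith

namespace Function.Involutive

variable {ι : Type*} {f : ι → ι}

theorem map_min_eq_max [LinearOrder ι] (hf : Involutive f) (i : ι) :
    f (min i (f i)) = max i (f i) := by
  rcases le_total i (f i) with h | h <;> simp [h, hf i]

theorem ne_of_ne_of_ne (hf : Involutive f) {i k u v : ι} (hki : k ≠ i) (hkfi : k ≠ f i)
    (hu : u = i ∨ u = f i) (hv : v = k ∨ v = f k) : u ≠ v := by
  rintro rfl
  rcases hu with rfl | rfl <;> rcases hv with h | h
  exacts [hki h.symm, hkfi (by rw [h, hf]), hkfi h.symm, hki (hf.injective h).symm]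

end Function.Involutive

theorem Set.Icc_disjoint_or_subset_or_subset_of_not_crossing {α : Type*} [LinearOrder α]
    {a b c d : α} (hbc : b ≠ c) (hda : d ≠ a)
    (hacbd : ¬(a < c ∧ c < b ∧ b < d)) (hcadb : ¬(c < a ∧ a < d ∧ d < b)) :
    Disjoint (Icc a b) (Icc c d) ∨ Icc a b ⊆ Icc c d ∨ Icc c d ⊆ Icc a b := by
  rcases hbc.lt_or_gt with hbc | hcb
  · exact Or.inl (disjoint_left.2 fun z hz hz' => (hz.2.trans_lt hbc).not_ge hz'.1)
  rcases hda.lt_or_gt with hda | had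
  · exact Or.inl (disjoint_left.2 fun z hz hz' => (hz'.2.trans_lt hda).not_ge hz.1)
  rcases lt_or_ge a c with hac | hca <;> rcases lt_or_ge b d with hbd | hdb
  · exact absurd ⟨hac, hcb, hbd⟩ hacbd
  · exact Or.inr (Or.inr (Icc_subset_Icc hac.le hdb))
  · exact Or.inr (Or.inl (Icc_subset_Icc hca hbd.le))
  rcases hca.eq_or_lt with rfl | hca
  · exact Or.inr (Or.inr (Icc_subset_Icc le_rfl hdb))
  rcases hdb.eq_or_lt with rfl | hdb
  · exact Or.inr (Or.inl (Icc_subset_Icc hca.le le_rfl))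
  exact absurd ⟨hca, had, hdb⟩ hcadb

section Matching

variable {ι : Type*} [Fintype ι]

/-- Each pair `{i, f i}` is counted twice. -/
def matchingCost (x : ι → ℝ) (g : ℝ → ℝ) (f : ι → ι) : ℝ := ∑ i, g |x i - x (f i)|

variable [LinearOrder ι] {x : ι → ℝ} {g : ℝ → ℝ} {f : ι → ι}

theorem matchingCost_conj_swap_lt (hx : StrictMono x) (hg : StrictConcaveOn ℝ (Ici 0) g)
    (hf : Involutive f) {a b c d : ι} (hab : f a = b) (hcd : f c = d)
    (hac : a < c) (hcb : c < b) (hbd : b < d) :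
    matchingCost x g (swap b d ∘ f ∘ swap b d) < matchingCost x g f := by
  have hba : f b = a := hab ▸ hf a
  have hdc : f d = c := hcd ▸ hf c
  have had : a < d := hac.trans (hcb.trans hbd)
  have hab' : a < b := hac.trans hcb
  have hcd' : c < d := hcb.trans hbd
  set f' := swap b d ∘ f ∘ swap b d
  have hagree : ∀ t ∉ ({a, b, c, d} : Finset ι), f' t = f t := by
    intro t ht
    simp only [Finset.mem_insert, Finset.mem_singleton, not_or] at ht
    obtain ⟨hta, htb, htc, htd⟩ := ht
    have hftb : f t ≠ b := fun h => hta (by rw [← hf t, h, hba])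
    have hftd : f t ≠ d := fun h => htc (by rw [← hf t, h, hdc])
    simp [f', swap_apply_of_ne_of_ne, *]
  have hf'a : f' a = d := by simp [f', swap_apply_of_ne_of_ne, hab'.ne, had.ne, hab]
  have hf'b : f' b = c := by simp [f', swap_apply_of_ne_of_ne, hdc, hcb.ne, hcd'.ne]
  have hf'c : f' c = b := by simp [f', swap_apply_of_ne_of_ne, hcb.ne, hcd'.ne, hcd]
  have hf'd : f' d = a := by simp [f', swap_apply_of_ne_of_ne, hba, hab'.ne, had.ne]
  have hdist : ∀ {t u : ι}, t < u → |x t - x u| = x u - x t ∧ |x u - x t| = x u - x t :=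
    fun h => ⟨abs_sub_comm (x _) _ ▸ abs_of_pos (sub_pos.2 (hx h)), abs_of_pos (sub_pos.2 (hx h))⟩
  have hcost : matchingCost x g f' - matchingCost x g f =
      2 * (g (x d - x a) + g (x b - x c) - (g (x b - x a) + g (x d - x c))) := by
    unfold matchingCost
    rw [← sum_sub_distrib, ← sum_subset (subset_univ {a, b, c, d})
      fun t _ ht => sub_eq_zero.2 (by rw [hagree t ht])]
    rw [sum_insert (by simp [hab'.ne, hac.ne, had.ne]), sum_insert (by simp [hcb.ne', hbd.ne]),
      sum_insert (by simp [hcd'.ne]), sum_singleton, hf'a, hf'b, hf'c, hf'd, hab, hba, hcd, hdc,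
      (hdist had).1, (hdist had).2, (hdist hab').1, (hdist hab').2, (hdist hcb).1, (hdist hcb).2,
      (hdist hcd').1, (hdist hcd').2]
    ring
  have hexch := hg.add_lt_add_of_lt_of_lt (p := x b - x a) (q := x d - x c)
    (P := x d - x a) (Q := x b - x c) (sub_pos.2 (hx hcb)).le (sub_pos.2 (hx had)).le
    (by linarith [hx hac]) (by linarith [hx hbd]) (by ring)
  linarith

theorem not_crossing_of_forall_matchingCost_le (hx : StrictMono x)
    (hg : StrictConcaveOn ℝ (Ici 0) g) (hf : Involutive f) (hfix : ∀ i, f i ≠ i)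
    (hmin : ∀ f' : ι → ι, Involutive f' → (∀ i, f' i ≠ i) →
      matchingCost x g f ≤ matchingCost x g f')
    ⦃a b c d : ι⦄ (hab : f a = b) (hcd : f c = d) : ¬(a < c ∧ c < b ∧ b < d) := by
  rintro ⟨hac, hcb, hbd⟩
  refine (hmin _ (fun t => ?_) (fun t ht => ?_)).not_gt
    (matchingCost_conj_swap_lt hx hg hf hab hcd hac hcb hbd)
  · simp [hf _]
  · exact hfix (swap b d t) (swap_apply_eq_iff.1 ht)

end Matching

theorem stmt_9_general (n : ℕ) (x : Fin (2 * n) → ℝ) (hx : StrictMono x)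
    (g : ℝ → ℝ)
    (hconc : ∀ a : ℝ, 0 ≤ a → ∀ b : ℝ, 0 ≤ b → a ≠ b → ∀ l : ℝ, 0 < l → l < 1 →
      l * g a + (1 - l) * g b < g (l * a + (1 - l) * b))
    (f : Fin (2 * n) → Fin (2 * n))
    (hinv : ∀ i, f (f i) = i) (hnfix : ∀ i, f i ≠ i)
    (hmin : ∀ f' : Fin (2 * n) → Fin (2 * n), (∀ i, f' (f' i) = i) →
      (∀ i, f' i ≠ i) →
      ∑ i, g |x i - x (f i)| ≤ ∑ i, g |x i - x (f' i)|) :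
    ∀ i k : Fin (2 * n), k ≠ i → k ≠ f i →
      Disjoint (Set.Icc (min (x i) (x (f i))) (max (x i) (x (f i))))
        (Set.Icc (min (x k) (x (f k))) (max (x k) (x (f k)))) ∨
      Set.Icc (min (x i) (x (f i))) (max (x i) (x (f i))) ⊆
        Set.Icc (min (x k) (x (f k))) (max (x k) (x (f k))) ∨
      Set.Icc (min (x k) (x (f k))) (max (x k) (x (f k))) ⊆
        Set.Icc (min (x i) (x (f i))) (max (x i) (x (f i))) := by
  intro i k hki hkfi
  have hf : Involutive f := hinv
  have hg : StrictConcaveOn ℝ (Ici 0) g := ⟨convex_Ici 0, fun a ha b hb hab l m hl hm hlm => by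
    obtain rfl : m = 1 - l := by linarith
    exact hconc a ha b hb hab l hl (by linarith)⟩
  have hcross := not_crossing_of_forall_matchingCost_le hx hg hf hnfix hmin
  simp only [← hx.monotone.map_min, ← hx.monotone.map_max]
  apply Icc_disjoint_or_subset_or_subset_of_not_crossing
  · exact hx.injective.ne (hf.ne_of_ne_of_ne hki hkfi (max_choice i (f i)) (min_choice k (f k)))
  · exact hx.injective.ne (hf.ne_of_ne_of_ne hki hkfi (min_choice i (f i)) (max_choice k (f k))).symm
  · simpa only [hx.lt_iff_lt] using hcross (hf.map_min_eq_max i) (hf.map_min_eq_max k)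
  · simpa only [hx.lt_iff_lt] using hcross (hf.map_min_eq_max k) (hf.map_min_eq_max i)

/-- A minimum-weight perfect matching (represented as a fixed-point-free
involution `f` of the index set) on points `x₁ < ⋯ < x_{2n}` with strictly
concave cost is nested. -/
theorem stmt_9 (n : ℕ) (x : Fin (2 * n) → ℝ) (hx : StrictMono x)
    (g : ℝ → ℝ)
    (hconc : ∀ a : ℝ, 0 ≤ a → ∀ b : ℝ, 0 ≤ b → a ≠ b → ∀ l : ℝ, 0 < l → l < 1 →
      l * g a + (1 - l) * g b < g (l * a + (1 - l) * b))
    (h0 : g 0 = 0) (hpos : ∀ a : ℝ, 0 < a → 0 < g a)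
    (f : Fin (2 * n) → Fin (2 * n))
    (hinv : ∀ i, f (f i) = i) (hnfix : ∀ i, f i ≠ i)
    (hmin : ∀ f' : Fin (2 * n) → Fin (2 * n), (∀ i, f' (f' i) = i) →
      (∀ i, f' i ≠ i) →
      ∑ i, g |x i - x (f i)| ≤ ∑ i, g |x i - x (f' i)|) :
    ∀ i k : Fin (2 * n), k ≠ i → k ≠ f i →
      Disjoint (Set.Icc (min (x i) (x (f i))) (max (x i) (x (f i))))
        (Set.Icc (min (x k) (x (f k))) (max (x k) (x (f k)))) ∨
      Set.Icc (min (x i) (x (f i))) (max (x i) (x (f i))) ⊆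
        Set.Icc (min (x k) (x (f k))) (max (x k) (x (f k))) ∨
      Set.Icc (min (x k) (x (f k))) (max (x k) (x (f k))) ⊆
        Set.Icc (min (x i) (x (f i))) (max (x i) (x (f i))) :=
  stmt_9_general n x hx g hconc f hinv hnfix hmin
end

section
/- Every restriction of a minimum-weight perfect matching is itself minimal: if M is a minimum-weight perfect matching on points x₁ < ... < x_{2n} and S is a union of pairs of M, then M restricted to the endpoints of S is a minimum-weight perfect matching on those endpoints. -/
/-!
Since `S` is a union of pairs of `f`, gluing any perfect matching `f'` of `S` to `f` outside `S`
gives a perfect matching of all points. Minimality of `f` against it leaves, after cancelling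
the common pairs outside `S`, exactly the comparison on `S`.
-/

open Finset Function

section Piecewise

variable {α : Type*} [DecidableEq α] {f f' : α → α} {S : Finset α}

theorem involutive_piecewise_of_mapsTo (hf : Involutive f) (hS : ∀ i ∈ S, f i ∈ S)
    (hf' : ∀ i ∈ S, f' i ∈ S ∧ f' (f' i) = i) : Involutive (S.piecewise f' f) := by
  intro i
  by_cases hi : i ∈ S
  · simp [hi, (hf' i hi).1, (hf' i hi).2]
  · have hfi : f i ∉ S := fun h => hi (hf i ▸ hS _ h)
    simp [hi, hfi, hf i]

theorem piecewise_apply_ne_self (hf : ∀ i, f i ≠ i) (hf' : ∀ i ∈ S, f' i ≠ i) (i : α) :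
    S.piecewise f' f i ≠ i := by
  by_cases hi : i ∈ S <;> simp [hi, hf, hf' i]

variable [Fintype α] {M : Type*} [AddCommMonoid M]

theorem sum_apply_piecewise (c : α → α → M) :
    ∑ i, c i (S.piecewise f' f i) = ∑ i ∈ S, c i (f' i) + ∑ i ∈ Sᶜ, c i (f i) := by
  rw [← sum_add_sum_compl S]
  congr 1
  · exact sum_congr rfl fun i hi => by rw [piecewise_eq_of_mem _ _ _ hi]
  · exact sum_congr rfl fun i hi => by rw [piecewise_eq_of_notMem _ _ _ (mem_compl.mp hi)]

theorem sum_le_sum_of_le_sum_apply_piecewise [PartialOrder M] [IsOrderedCancelAddMonoid M]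
    {c : α → α → M} (h : ∑ i, c i (f i) ≤ ∑ i, c i (S.piecewise f' f i)) :
    ∑ i ∈ S, c i (f i) ≤ ∑ i ∈ S, c i (f' i) := by
  rw [sum_apply_piecewise, ← sum_add_sum_compl S] at h
  exact le_of_add_le_add_right h

end Piecewise

theorem stmt_13_general (n : ℕ) (x : Fin (2 * n) → ℝ)
    (g : ℝ → ℝ)
    (f : Fin (2 * n) → Fin (2 * n))
    (hinv : ∀ i, f (f i) = i) (hnfix : ∀ i, f i ≠ i)
    (hmin : ∀ f' : Fin (2 * n) → Fin (2 * n), (∀ i, f' (f' i) = i) →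
      (∀ i, f' i ≠ i) →
      ∑ i, g |x i - x (f i)| ≤ ∑ i, g |x i - x (f' i)|)
    (S : Finset (Fin (2 * n))) (hS : ∀ i ∈ S, f i ∈ S) :
    ∀ f' : Fin (2 * n) → Fin (2 * n),
      (∀ i ∈ S, f' i ∈ S ∧ f' (f' i) = i ∧ f' i ≠ i) →
      ∑ i ∈ S, g |x i - x (f i)| ≤ ∑ i ∈ S, g |x i - x (f' i)| := by
  intro f' hf'
  refine sum_le_sum_of_le_sum_apply_piecewise (c := fun i j => g |x i - x j|) (hmin _ ?_ ?_)
  · exact involutive_piecewise_of_mapsTo hinv hS fun i hi => ⟨(hf' i hi).1, (hf' i hi).2.1⟩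
  · exact piecewise_apply_ne_self hnfix fun i hi => (hf' i hi).2.2

/-- Bellman principle: the restriction of a minimum-weight perfect matching to a
union `S` of its pairs is a minimum-weight perfect matching on the endpoints in
`S`. -/
theorem stmt_13 (n : ℕ) (x : Fin (2 * n) → ℝ) (hx : StrictMono x)
    (g : ℝ → ℝ)
    (hconc : ∀ a : ℝ, 0 ≤ a → ∀ b : ℝ, 0 ≤ b → a ≠ b → ∀ l : ℝ, 0 < l → l < 1 →
      l * g a + (1 - l) * g b < g (l * a + (1 - l) * b))
    (h0 : g 0 = 0) (hpos : ∀ a : ℝ, 0 < a → 0 < g a)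
    (f : Fin (2 * n) → Fin (2 * n))
    (hinv : ∀ i, f (f i) = i) (hnfix : ∀ i, f i ≠ i)
    (hmin : ∀ f' : Fin (2 * n) → Fin (2 * n), (∀ i, f' (f' i) = i) →
      (∀ i, f' i ≠ i) →
      ∑ i, g |x i - x (f i)| ≤ ∑ i, g |x i - x (f' i)|)
    (S : Finset (Fin (2 * n))) (hS : ∀ i ∈ S, f i ∈ S) :
    ∀ f' : Fin (2 * n) → Fin (2 * n),
      (∀ i ∈ S, f' i ∈ S ∧ f' (f' i) = i ∧ f' i ≠ i) →
      ∑ i ∈ S, g |x i - x (f i)| ≤ ∑ i ∈ S, g |x i - x (f' i)| :=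
  stmt_13_general n x g f hinv hnfix hmin S hS
end

section
/- For points x₁ < ... < x_{2n} with weight d(x,y) = g(|x-y|), g concave, g(0)=0, g ≥ 0: if for every i of opposite parity with j (i<j) one has W(i,j) = W(i,j-2) + W(i+2,j) - W(i+2,j-2) (the second alternative always attains the minimum in the recursion), then the matching {x₁,x₂}, {x₃,x₄}, ..., {x_{2n-1},x_{2n}} is a minimum-weight perfect matching, i.e., W(1,2n) = Σ_{k=1}^{n} d(x_{2k-1}, x_{2k}). -/
/-!
Along each diagonal the hypothesis is a second-order linear recurrence in the length of the
interval. Together with the boundary conventions `W(i, i-1) = 0` and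
`W(i+2, i-1) = -d(xᵢ, x_{i+1})` it telescopes: `W(i, i+2m-1)` is the weight of the matching
of consecutive pairs of `{i, …, i+2m-1}`, by induction on `m` simultaneously for all `i`.
-/

/-- `f` is a perfect matching of the index interval `{i, …, j}`. -/
def IsPM (i j : ℕ) (f : ℕ → ℕ) : Prop :=
  ∀ k ∈ Finset.Icc i j, f k ∈ Finset.Icc i j ∧ f (f k) = k ∧ f k ≠ k

/-- The weight of the matching `f` of `{i, …, j}` (each pair counted once). -/
noncomputable def matchWeight (x : ℕ → ℝ) (g : ℝ → ℝ) (i j : ℕ) (f : ℕ → ℕ) : ℝ :=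
  (∑ k ∈ Finset.Icc i j, g |x k - x (f k)|) / 2

/-- `w` is the minimum weight of a perfect matching on `{i, …, j}`. -/
def IsMinWeight (x : ℕ → ℝ) (g : ℝ → ℝ) (i j : ℕ) (w : ℝ) : Prop :=
  (∃ f, IsPM i j f ∧ w = matchWeight x g i j f) ∧
  ∀ f, IsPM i j f → w ≤ matchWeight x g i j f

open Finset

/-- Here `d i` is the weight of the pair `{xᵢ, x_{i+1}}`. -/
theorem eq_sum_consecutive_pairs_of_recurrence (d : ℕ → ℝ) (W : ℕ → ℕ → ℝ) (N : ℕ)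
    (hconv1 : ∀ i : ℕ, 1 ≤ i → W i (i - 1) = 0)
    (hconv2 : ∀ i : ℕ, 1 ≤ i → W (i + 2) (i - 1) = -d i)
    (hrec : ∀ i j : ℕ, 1 ≤ i → i < j → j ≤ N → Odd (j - i) →
      W i j = W i (j - 2) + W (i + 2) j - W (i + 2) (j - 2)) (m : ℕ) :
    ∀ i, 1 ≤ i → i + 2 * m ≤ N + 1 →
      W i (i + 2 * m - 1) = ∑ k ∈ range m, d (i + 2 * k) := by
  induction m using Nat.twoStepInduction with
  | zero => exact fun i hi _ ↦ by simpa using hconv1 i hi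
  | one =>
    intro i hi hN
    have h := hrec i (i + 1) hi (by omega) (by omega) (by simp)
    rw [show i + 1 - 2 = i - 1 by omega, hconv1 i hi, hconv2 i hi] at h
    have hnext : W (i + 2) (i + 1) = 0 := by simpa using hconv1 (i + 2) (by omega)
    simp [h, hnext]
  | more m ih ih' =>
    intro i hi hN
    have h := hrec i (i + 2 * (m + 2) - 1) hi (by omega) (by omega) ⟨m + 1, by omega⟩
    have hi₁ := ih' i hi (by omega)
    have hi₂ := ih' (i + 2) (by omega) (by omega)
    have hi₃ := ih (i + 2) (by omega) (by omega)
    rw [show i + 2 * (m + 2) - 1 - 2 = i + 2 * (m + 1) - 1 by omega, hi₁,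
      show i + 2 * (m + 2) - 1 = i + 2 + 2 * (m + 1) - 1 by omega, hi₂,
      show i + 2 * (m + 1) - 1 = i + 2 + 2 * m - 1 by omega, hi₃] at h
    rw [show i + 2 * (m + 2) - 1 = i + 2 + 2 * (m + 1) - 1 by omega, h]
    simp only [sum_range_succ]
    ring_nf

theorem stmt_17_general (n : ℕ) (x : ℕ → ℝ) (g : ℝ → ℝ)
    (W : ℕ → ℕ → ℝ)
    (hconv1 : ∀ i : ℕ, 1 ≤ i → W i (i - 1) = 0)
    (hconv2 : ∀ i : ℕ, 1 ≤ i → W (i + 2) (i - 1) = -g |x i - x (i + 1)|)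
    (hsecond : ∀ i j : ℕ, 1 ≤ i → i < j → j ≤ 2 * n → Odd (j - i) →
      W i j = W i (j - 2) + W (i + 2) j - W (i + 2) (j - 2)) :
    W 1 (2 * n) = ∑ k ∈ Finset.range n, g |x (2 * k + 1) - x (2 * k + 2)| := by
  have h := eq_sum_consecutive_pairs_of_recurrence (fun i ↦ g |x i - x (i + 1)|) W (2 * n)
    hconv1 hconv2 hsecond n 1 le_rfl (by omega)
  rw [show 1 + 2 * n - 1 = 2 * n by omega] at h
  rw [h]
  exact sum_congr rfl fun k _ ↦ by ring_nf

/-- If the second alternative of the recursion always attains the minimum, then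
the matching of consecutive pairs `{x₁,x₂}, …, {x_{2n-1},x_{2n}}` is optimal:
`W(1,2n) = ∑_{k=1}^{n} d(x_{2k-1}, x_{2k})`. -/
theorem stmt_17 (n : ℕ) (x : ℕ → ℝ) (hx : StrictMono x) (g : ℝ → ℝ)
    (hg0 : ∀ a : ℝ, 0 ≤ a → 0 ≤ g a) (h0 : g 0 = 0)
    (hconc : ∀ a : ℝ, 0 ≤ a → ∀ b : ℝ, 0 ≤ b → ∀ l : ℝ, 0 ≤ l → l ≤ 1 →
      l * g a + (1 - l) * g b ≤ g (l * a + (1 - l) * b))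
    (W : ℕ → ℕ → ℝ)
    (hW : ∀ i j : ℕ, 1 ≤ i → i < j → Odd (j - i) → IsMinWeight x g i j (W i j))
    (hconv1 : ∀ i : ℕ, 1 ≤ i → W i (i - 1) = 0)
    (hconv2 : ∀ i : ℕ, 1 ≤ i → W (i + 2) (i - 1) = -g |x i - x (i + 1)|)
    (hsecond : ∀ i j : ℕ, 1 ≤ i → i < j → j ≤ 2 * n → Odd (j - i) →
      W i j = W i (j - 2) + W (i + 2) j - W (i + 2) (j - 2)) :
    W 1 (2 * n) = ∑ k ∈ Finset.range n, g |x (2 * k + 1) - x (2 * k + 2)| :=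
  stmt_17_general n x g W hconv1 hconv2 hsecond
end
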